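/- arXiv:math/0210473 — 5 statements merged into one kernel-verified Lean document; each statement's English description precedes it below -/
import Mathlib

section
/- Any nonempty finite word over an alphabet of L letters can be written as a concatenation of at most L nonempty subwords, each of which begins and ends with the same letter. -/
/-!
Peel off the last piece: if `b` is the last letter of `w` and `w = s ++ b :: t` with `b ∉ s`,
then `b :: t` begins and ends with `b`, and `s` uses strictly fewer distinct letters than `w`.
By induction, `w` splits into at most as many such pieces as it has distinct letters.
-/

namespace List

variable {α : Type*}

theorem exists_eq_append_cons_notMem_of_mem {a : α} {l : List α} (h : a ∈ l) :
    ∃ s t, l = s ++ a :: t ∧ a ∉ s := by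
  induction l with
  | nil => cases h
  | cons b l ih =>
    by_cases hb : b = a
    · exact ⟨[], l, by rw [hb, nil_append], not_mem_nil⟩
    · obtain ⟨s, t, rfl, hs⟩ := ih ((mem_cons.mp h).resolve_left (Ne.symm hb))
      exact ⟨b :: s, t, rfl, by simp [Ne.symm hb, hs]⟩

theorem exists_flatten_eq_head?_eq_getLast?_length_le [DecidableEq α] (w : List α) :
    ∃ ws : List (List α), ws.length ≤ w.toFinset.card ∧
      (∀ u ∈ ws, u ≠ [] ∧ u.head? = u.getLast?) ∧ ws.flatten = w := by
  rcases eq_nil_or_concat' w with rfl | ⟨_, b, hw⟩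
  · exact ⟨[], le_rfl, by simp, rfl⟩
  obtain ⟨s, t, hst, hbs⟩ :=
    exists_eq_append_cons_notMem_of_mem (show b ∈ w by simp [hw])
  have : s.length < w.length := by simp [hst]
  obtain ⟨ws, hlen, hgood, hflat⟩ := exists_flatten_eq_head?_eq_getLast?_length_le s
  have hlast : (b :: t).getLast? = some b := by
    have := congrArg getLast? (hst.symm.trans hw)
    simpa [getLast?_append] using this
  have hcard : s.toFinset.card < w.toFinset.card := by
    refine Finset.card_lt_card ((Finset.ssubset_iff_of_subset ?_).mpr ⟨b, ?_, ?_⟩)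
    · rw [hst, toFinset_append]; exact Finset.subset_union_left
    · simp [hst]
    · simpa using hbs
  refine ⟨ws ++ [b :: t], ?_, ?_, by simp [hflat, hst]⟩
  · simp only [length_append, length_singleton]; omega
  · intro u hu
    rcases mem_append.mp hu with hu | hu
    · exact hgood u hu
    · rw [mem_singleton.mp hu, hlast]
      exact ⟨cons_ne_nil b t, rfl⟩
termination_by w.length

end List

theorem word_splitting_general {A : Type*} [Fintype A] (L : ℕ) (hL : Fintype.card A = L)
    (w : List A) :
    ∃ ws : List (List A), ws.length ≤ L ∧
      (∀ u ∈ ws, u ≠ [] ∧ u.head? = u.getLast?) ∧ ws.flatten = w := by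
  classical
  obtain ⟨ws, hlen, hgood, hflat⟩ := w.exists_flatten_eq_head?_eq_getLast?_length_le
  exact ⟨ws, hlen.trans (hL ▸ w.toFinset.card_le_univ), hgood, hflat⟩

/-- Any nonempty finite word over an alphabet of `L` letters can be written as a
concatenation of at most `L` nonempty subwords, each beginning and ending with the
same letter. -/
theorem word_splitting {A : Type*} [Fintype A] (L : ℕ) (hL : Fintype.card A = L)
    (w : List A) (hw : w ≠ []) :
    ∃ ws : List (List A), ws.length ≤ L ∧
      (∀ u ∈ ws, u ≠ [] ∧ u.head? = u.getLast?) ∧ ws.flatten = w :=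
  word_splitting_general L hL w
end

section
/- Let Φ be a continuous flow on a compact metric space X and let g : X × ℝ → ℝ be a continuous cocycle for Φ (meaning g(x, s+t) = g(x,s) + g(x·s, t)). Suppose there exist μ > 0 and ν > 0 such that g(x,t) ≤ −μt + ν for all x ∈ X and t ≥ 0. Then the function f(x) := sup_{t ≥ 0} g(x,t) is well defined, finite, and continuous on X. -/
/-!
Since `g(·, 0)` is bounded below on the compact space, the bound forces `g x t ≤ g x 0` for all
`t` beyond a threshold `T` independent of `x`. So the supremum over `t ≥ 0` is already attained on
the compact interval `[0, T]`, and a supremum of a jointly continuous function over a fixed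
compact set depends continuously on the parameter.
-/

open Set

theorem isLUB_image_Ici_of_tail_le {α β : Type*} [ConditionallyCompleteLinearOrder α]
    [TopologicalSpace α] [OrderTopology α] [LinearOrder β] [TopologicalSpace β]
    [CompactIccSpace β] {h : β → α} {a b : β} (hab : a ≤ b) (hh : ContinuousOn h (Icc a b))
    (htail : ∀ t, b < t → h t ≤ h a) :
    IsLUB (h '' Ici a) (sSup (h '' Icc a b)) := by
  have ha : h a ∈ h '' Icc a b := ⟨a, ⟨le_rfl, hab⟩, rfl⟩
  have hK : IsLUB (h '' Icc a b) (sSup (h '' Icc a b)) :=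
    (isCompact_Icc.image_of_continuousOn hh).isLUB_sSup ⟨_, ha⟩
  refine ⟨?_, fun c hc => hK.2 (upperBounds_mono_set (image_mono Icc_subset_Ici_self) hc)⟩
  rintro _ ⟨t, hat, rfl⟩
  rcases le_or_gt t b with htb | hbt
  · exact hK.1 ⟨t, ⟨hat, htb⟩, rfl⟩
  · exact (htail t hbt).trans (hK.1 ha)

theorem sup_cocycle_continuous_general {X : Type*} [MetricSpace X] [CompactSpace X]
    (g : X → ℝ → ℝ) (hg : Continuous fun p : X × ℝ => g p.1 p.2)
    (μ ν : ℝ) (hμ : 0 < μ)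
    (hbound : ∀ x : X, ∀ t : ℝ, 0 ≤ t → g x t ≤ -μ * t + ν) :
    ∃ f : X → ℝ, Continuous f ∧
      ∀ x : X, IsLUB {y : ℝ | ∃ t : ℝ, 0 ≤ t ∧ y = g x t} (f x) := by
  obtain ⟨m, hm⟩ : BddBelow (range fun x => g x 0) :=
    (isCompact_range (hg.comp (continuous_id.prodMk continuous_const))).bddBelow
  set T := max 0 ((ν - m) / μ)
  have htail : ∀ x t, T < t → g x t ≤ g x 0 := by
    intro x t hTt
    have hνm : ν - m < μ * t := by
      rw [← div_lt_iff₀' hμ]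
      exact (le_max_right _ _).trans_lt hTt
    linarith [hbound x t ((le_max_left _ _).trans hTt.le), hm ⟨x, rfl⟩]
  refine ⟨fun x => sSup (g x '' Icc 0 T), isCompact_Icc.continuous_sSup hg, fun x => ?_⟩
  have hset : {y : ℝ | ∃ t : ℝ, 0 ≤ t ∧ y = g x t} = g x '' Ici 0 := by
    ext y
    simp [eq_comm]
  rw [hset]
  exact isLUB_image_Ici_of_tail_le (le_max_left _ _)
    (hg.comp (continuous_const.prodMk continuous_id)).continuousOn (htail x)

/-- If a jointly continuous cocycle `g` over a continuous flow on a compact metric space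
satisfies `g x t ≤ -μt + ν` for all `x` and `t ≥ 0` (with `μ, ν > 0`), then
`f x = sup_{t ≥ 0} g x t` is a well-defined finite continuous function. -/
theorem sup_cocycle_continuous {X : Type*} [MetricSpace X] [CompactSpace X]
    (φ : X → ℝ → X) (hφ : Continuous fun p : X × ℝ => φ p.1 p.2)
    (h0 : ∀ x, φ x 0 = x) (hadd : ∀ x s t, φ (φ x s) t = φ x (s + t))
    (g : X → ℝ → ℝ) (hg : Continuous fun p : X × ℝ => g p.1 p.2)
    (hcoc : ∀ x s t, g x (s + t) = g x s + g (φ x s) t)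
    (μ ν : ℝ) (hμ : 0 < μ) (hν : 0 < ν)
    (hbound : ∀ x : X, ∀ t : ℝ, 0 ≤ t → g x t ≤ -μ * t + ν) :
    ∃ f : X → ℝ, Continuous f ∧
      ∀ x : X, IsLUB {y : ℝ | ∃ t : ℝ, 0 ≤ t ∧ y = g x t} (f x) :=
  sup_cocycle_continuous_general g hg μ ν hμ hbound
end

section
/- Under the hypotheses of the previous statement, with f(x) = sup_{t ≥ 0} g(x,t), the modified cocycle g_1(x,t) := g(x,t) + f(x·t) − f(x) satisfies g_1(x,t) ≤ 0 for all x ∈ X and t ≥ 0. Moreover there exists T > 1 such that g_1(x,t) ≤ −1 for all x ∈ X and t ≥ T. -/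
/-!
A cocycle `g` satisfies `g x (t + s) = g x t + g (x·t) s`, so every value of `g (x·t)` on `[0, ∞)`
is a value of `g x` minus `g x t`; taking suprema gives `f (x·t) ≤ f x - g x t`, i.e. `g₁ ≤ 0`.
For the second claim, `0 = g x 0 ≤ f ≤ ν` bounds `f (x·t) - f x` by `ν`, while `g x t ≤ -μ t + ν`
falls below `-ν - 1` once `μ t ≥ 2ν + 1`.
-/

section SupremumFunction

variable {X : Type*} {φ : X → ℝ → X} {g : X → ℝ → ℝ} {f : X → ℝ}

theorem cocycle_apply_zero (h0 : ∀ x, φ x 0 = x)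
    (hcoc : ∀ x s t, g x (s + t) = g x s + g (φ x s) t) (x : X) : g x 0 = 0 := by
  have h := hcoc x 0 0
  rw [add_zero, h0] at h
  linarith

theorem sup_flow_le_sub (hcoc : ∀ x s t, g x (s + t) = g x s + g (φ x s) t)
    (hf : ∀ x : X, IsLUB {y : ℝ | ∃ t : ℝ, 0 ≤ t ∧ y = g x t} (f x)) {x : X} {t : ℝ}
    (ht : 0 ≤ t) : f (φ x t) ≤ f x - g x t := by
  refine (hf (φ x t)).2 ?_
  rintro _ ⟨s, hs, rfl⟩
  have hle : g x (t + s) ≤ f x := (hf x).1 ⟨t + s, add_nonneg ht hs, rfl⟩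
  linarith [hcoc x t s]

theorem sup_nonneg (hg0 : ∀ x, g x 0 = 0)
    (hf : ∀ x : X, IsLUB {y : ℝ | ∃ t : ℝ, 0 ≤ t ∧ y = g x t} (f x)) (x : X) : 0 ≤ f x :=
  (hf x).1 ⟨0, le_rfl, (hg0 x).symm⟩

theorem sup_le_of_bound {μ ν : ℝ} (hμ : 0 ≤ μ) (hbound : ∀ x : X, ∀ t : ℝ, 0 ≤ t → g x t ≤ -μ * t + ν)
    (hf : ∀ x : X, IsLUB {y : ℝ | ∃ t : ℝ, 0 ≤ t ∧ y = g x t} (f x)) (x : X) : f x ≤ ν := by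
  refine (hf x).2 ?_
  rintro _ ⟨t, ht, rfl⟩
  nlinarith [hbound x t ht]

theorem modified_cocycle_le_neg_one {μ ν : ℝ} (hμ : 0 ≤ μ) (hg0 : ∀ x, g x 0 = 0)
    (hbound : ∀ x : X, ∀ t : ℝ, 0 ≤ t → g x t ≤ -μ * t + ν)
    (hf : ∀ x : X, IsLUB {y : ℝ | ∃ t : ℝ, 0 ≤ t ∧ y = g x t} (f x)) {x : X} {t : ℝ}
    (ht : 0 ≤ t) (hlarge : 2 * ν + 1 ≤ μ * t) : g x t + f (φ x t) - f x ≤ -1 := by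
  linarith [hbound x t ht, sup_le_of_bound hμ hbound hf (φ x t), sup_nonneg hg0 hf x]

end SupremumFunction

theorem modified_cocycle_nonpositive_general {X : Type*}
    (φ : X → ℝ → X)
    (h0 : ∀ x, φ x 0 = x)
    (g : X → ℝ → ℝ)
    (hcoc : ∀ x s t, g x (s + t) = g x s + g (φ x s) t)
    (μ ν : ℝ) (hμ : 0 < μ)
    (hbound : ∀ x : X, ∀ t : ℝ, 0 ≤ t → g x t ≤ -μ * t + ν)
    (f : X → ℝ) (hf : ∀ x : X, IsLUB {y : ℝ | ∃ t : ℝ, 0 ≤ t ∧ y = g x t} (f x)) :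
    (∀ x : X, ∀ t : ℝ, 0 ≤ t → g x t + f (φ x t) - f x ≤ 0) ∧
      ∃ T : ℝ, 1 < T ∧ ∀ x : X, ∀ t : ℝ, T ≤ t → g x t + f (φ x t) - f x ≤ -1 := by
  refine ⟨fun x t ht => by linarith [sup_flow_le_sub hcoc hf (x := x) ht], ?_⟩
  refine ⟨max 2 ((2 * ν + 1) / μ), one_lt_two.trans_le (le_max_left _ _), fun x t hT => ?_⟩
  have ht : 0 ≤ t := zero_le_two.trans ((le_max_left _ _).trans hT)
  have hlarge : 2 * ν + 1 ≤ μ * t := by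
    rw [← div_le_iff₀' hμ]
    exact (le_max_right _ _).trans hT
  exact modified_cocycle_le_neg_one hμ.le (cocycle_apply_zero h0 hcoc) hbound hf ht hlarge

/-- With `f x = sup_{t ≥ 0} g x t`, the modified cocycle
`g₁ x t = g x t + f (x·t) - f x` is nonpositive for `t ≥ 0`, and there is `T > 1`
with `g₁ x t ≤ -1` for all `x` and `t ≥ T`. -/
theorem modified_cocycle_nonpositive {X : Type*} [MetricSpace X] [CompactSpace X]
    (φ : X → ℝ → X) (hφ : Continuous fun p : X × ℝ => φ p.1 p.2)
    (h0 : ∀ x, φ x 0 = x) (hadd : ∀ x s t, φ (φ x s) t = φ x (s + t))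
    (g : X → ℝ → ℝ) (hg : Continuous fun p : X × ℝ => g p.1 p.2)
    (hcoc : ∀ x s t, g x (s + t) = g x s + g (φ x s) t)
    (μ ν : ℝ) (hμ : 0 < μ) (hν : 0 < ν)
    (hbound : ∀ x : X, ∀ t : ℝ, 0 ≤ t → g x t ≤ -μ * t + ν)
    (f : X → ℝ) (hf : ∀ x : X, IsLUB {y : ℝ | ∃ t : ℝ, 0 ≤ t ∧ y = g x t} (f x)) :
    (∀ x : X, ∀ t : ℝ, 0 ≤ t → g x t + f (φ x t) - f x ≤ 0) ∧
      ∃ T : ℝ, 1 < T ∧ ∀ x : X, ∀ t : ℝ, T ≤ t → g x t + f (φ x t) - f x ≤ -1 :=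
  modified_cocycle_nonpositive_general φ h0 g hcoc μ ν hμ hbound f hf
end

section
/- Let Φ be a continuous flow on a compact metric space and let g : X × ℝ → ℝ be a jointly continuous cocycle for Φ with g(x,t) ≤ −μt + ν for all x in a subset C ⊆ X and all t ≥ 0, where μ, ν > 0. Suppose additionally there is a constant C_0 > 0 such that |g(x,t)| < C_0 for all x in a set Y ⊆ X and t ≥ 0. If a sequence x_n ∈ C converges to a point x_0 ∈ Y, then choosing t_0 = (ν + 2C_0)/μ yields a contradiction; hence the closure of C does not meet Y. (In the paper: the set C_ξ = R − R_ξ is closed.) -/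
open Filter

/-!
Each time-`t` bound `g x t ≤ -μ t + ν` is a closed condition on `x`, so it passes from `C` to its
closure. At a point of `Y` the cocycle stays above `-C₀`, while the affine bound eventually drops
below `-C₀`; the two are incompatible.
-/

lemma forall_le_of_mem_closure {X : Type*} [TopologicalSpace X] {g : X → ℝ → ℝ}
    (hg : ∀ t, Continuous fun x => g x t) {b : ℝ → ℝ} {C : Set X}
    (hC : ∀ x ∈ C, ∀ t, 0 ≤ t → g x t ≤ b t) {x : X} (hx : x ∈ closure C) :
    ∀ t, 0 ≤ t → g x t ≤ b t := by
  have hclosed : IsClosed {x | ∀ t, 0 ≤ t → g x t ≤ b t} := by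
    simp only [Set.ofPred_forall]
    exact isClosed_iInter fun t => isClosed_iInter fun _ => isClosed_le (hg t) continuous_const
  exact closure_minimal hC hclosed hx

lemma exists_nonneg_neg_mul_add_le {μ : ℝ} (hμ : 0 < μ) (ν c : ℝ) :
    ∃ t, 0 ≤ t ∧ -μ * t + ν ≤ c := by
  have hbot : Tendsto (fun t => -μ * t + ν) atTop atBot :=
    tendsto_atBot_add_const_right _ ν (tendsto_id.const_mul_atTop_of_neg (neg_neg_of_pos hμ))
  exact ((eventually_ge_atTop 0).and (hbot.eventually_le_atBot c)).exists

theorem closure_disjoint_of_cocycle_decay_general {X : Type*} [MetricSpace X]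
    (g : X → ℝ → ℝ) (hg : Continuous fun p : X × ℝ => g p.1 p.2)
    (C Y : Set X) (μ ν : ℝ) (hμ : 0 < μ)
    (hdecay : ∀ x ∈ C, ∀ t : ℝ, 0 ≤ t → g x t ≤ -μ * t + ν)
    (C₀ : ℝ)
    (hbdd : ∀ x ∈ Y, ∀ t : ℝ, 0 ≤ t → |g x t| < C₀) :
    closure C ∩ Y = ∅ := by
  refine Set.eq_empty_iff_forall_notMem.mpr ?_
  rintro x ⟨hxC, hxY⟩
  obtain ⟨t, ht, hlow⟩ := exists_nonneg_neg_mul_add_le hμ ν (-C₀)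
  have hdecay_x := forall_le_of_mem_closure (g := g) (fun t => hg.comp (Continuous.prodMk_left t))
    hdecay hxC t ht
  have hbdd_x := hbdd x hxY t ht
  linarith [neg_abs_le (g x t)]

/-- If a jointly continuous cocycle decays linearly on `C` and is bounded on `Y`, then
the closure of `C` does not meet `Y` (in the paper: the set `C_ξ = R - R_ξ` is closed). -/
theorem closure_disjoint_of_cocycle_decay {X : Type*} [MetricSpace X] [CompactSpace X]
    (φ : X → ℝ → X) (hφ : Continuous fun p : X × ℝ => φ p.1 p.2)
    (h0 : ∀ x, φ x 0 = x) (hadd : ∀ x s t, φ (φ x s) t = φ x (s + t))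
    (g : X → ℝ → ℝ) (hg : Continuous fun p : X × ℝ => g p.1 p.2)
    (hcoc : ∀ x s t, g x (s + t) = g x s + g (φ x s) t)
    (C Y : Set X) (μ ν : ℝ) (hμ : 0 < μ) (hν : 0 < ν)
    (hdecay : ∀ x ∈ C, ∀ t : ℝ, 0 ≤ t → g x t ≤ -μ * t + ν)
    (C₀ : ℝ) (hC₀ : 0 < C₀)
    (hbdd : ∀ x ∈ Y, ∀ t : ℝ, 0 ≤ t → |g x t| < C₀) :
    closure C ∩ Y = ∅ :=
  closure_disjoint_of_cocycle_decay_general g hg C Y μ ν hμ hdecay C₀ hbdd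
end

section
/- Let X be a metric space, A ⊆ X a closed subset, and suppose every continuous real-valued function on A extends to a continuous function on X (Tietze). Let ω be a continuous closed one-form on A with Čech class ξ ∈ Ȟ¹(A;ℝ), and suppose ξ' ∈ Ȟ¹(X;ℝ) satisfies ξ'|_A = ξ. Then there exists a continuous closed one-form ω' on X representing ξ' with ω'|_A = ω. -/
/-!
If `Ω|_A` and `ω + df` define the same form, extend `f` to a continuous `F` on `X` by
Tietze. Then `ω' = Ω - dF` is cohomologous to `Ω`, and on `A` it is `Ω|_A - df`, i.e. `ω`.
-/

/-- A presentation of a continuous closed one-form: a family of continuous functions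
over an open cover. -/
structure PreForm (Y : Type) [TopologicalSpace Y] : Type 1 where
  ι : Type
  U : ι → Set Y
  isOpen : ∀ i, IsOpen (U i)
  covers : ∀ y : Y, ∃ i, y ∈ U i
  φ : ι → Y → ℝ
  cont : ∀ i, ContinuousOn (φ i) (U i)

/-- `h` is locally constant on the subset `S`. -/
def LocallyConstantOn {Y : Type} [TopologicalSpace Y] (h : Y → ℝ) (S : Set Y) : Prop :=
  ∀ y ∈ S, ∃ V : Set Y, IsOpen V ∧ y ∈ V ∧ ∀ z ∈ V ∩ S, h z = h y

/-- The defining condition for a continuous closed one-form: the differences of local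
functions are locally constant on overlaps. -/
def PreForm.IsClosedForm {Y : Type} [TopologicalSpace Y] (ω : PreForm Y) : Prop :=
  ∀ i j, LocallyConstantOn (fun y => ω.φ i y - ω.φ j y) (ω.U i ∩ ω.U j)

/-- Two presentations define the same continuous closed one-form. -/
def PreForm.Equiv {Y : Type} [TopologicalSpace Y] (ω₁ ω₂ : PreForm Y) : Prop :=
  ω₁.IsClosedForm ∧ ω₂.IsClosedForm ∧
    ∀ i j, LocallyConstantOn (fun y => ω₁.φ i y - ω₂.φ j y) (ω₁.U i ∩ ω₂.U j)

/-- Restriction of a closed one-form to a subset. -/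
def PreForm.restrict {Y : Type} [TopologicalSpace Y] (ω : PreForm Y) (A : Set Y) :
    PreForm A where
  ι := ω.ι
  U i := Subtype.val ⁻¹' ω.U i
  isOpen i := (ω.isOpen i).preimage continuous_subtype_val
  covers a := ω.covers a.val
  φ i a := ω.φ i a.val
  cont i := (ω.cont i).comp continuous_subtype_val.continuousOn (fun a ha => ha)

/-- The differential `df` of a continuous function `f`, as a closed one-form. -/
def PreForm.ofFun {Y : Type} [TopologicalSpace Y] (f : Y → ℝ) (hf : Continuous f) :
    PreForm Y where
  ι := PUnit
  U _ := Set.univ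
  isOpen _ := isOpen_univ
  covers _ := ⟨PUnit.unit, trivial⟩
  φ _ := f
  cont _ := hf.continuousOn

/-- The sum of two closed one-forms. -/
def PreForm.add {Y : Type} [TopologicalSpace Y] (ω₁ ω₂ : PreForm Y) : PreForm Y where
  ι := ω₁.ι × ω₂.ι
  U p := ω₁.U p.1 ∩ ω₂.U p.2
  isOpen p := (ω₁.isOpen p.1).inter (ω₂.isOpen p.2)
  covers y := by
    obtain ⟨i, hi⟩ := ω₁.covers y
    obtain ⟨j, hj⟩ := ω₂.covers y
    exact ⟨⟨i, j⟩, hi, hj⟩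
  φ p y := ω₁.φ p.1 y + ω₂.φ p.2 y
  cont p := ((ω₁.cont p.1).mono Set.inter_subset_left).add
    ((ω₂.cont p.2).mono Set.inter_subset_right)

/-- Two closed one-forms are cohomologous (represent the same Čech class) iff they
differ by the differential of a continuous function. -/
def Cohomologous {Y : Type} [TopologicalSpace Y] (ω₁ ω₂ : PreForm Y) : Prop :=
  ∃ (f : Y → ℝ) (hf : Continuous f), PreForm.Equiv ω₁ (ω₂.add (PreForm.ofFun f hf))

namespace LocallyConstantOn

variable {Y : Type} [TopologicalSpace Y] {h h' : Y → ℝ} {S T : Set Y}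

theorem mono (hl : LocallyConstantOn h S) (hTS : T ⊆ S) : LocallyConstantOn h T := by
  intro y hy
  obtain ⟨V, hV, hyV, hc⟩ := hl y (hTS hy)
  exact ⟨V, hV, hyV, fun z hz => hc z ⟨hz.1, hTS hz.2⟩⟩

theorem congr (hl : LocallyConstantOn h S) (he : Set.EqOn h h' S) :
    LocallyConstantOn h' S := by
  intro y hy
  obtain ⟨V, hV, hyV, hc⟩ := hl y hy
  exact ⟨V, hV, hyV, fun z hz => by rw [← he hz.2, ← he hy]; exact hc z hz⟩

end LocallyConstantOn

namespace PreForm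

variable {Y : Type} [TopologicalSpace Y]

theorem restrict_add (ω₁ ω₂ : PreForm Y) (A : Set Y) :
    (ω₁.add ω₂).restrict A = (ω₁.restrict A).add (ω₂.restrict A) := rfl

theorem restrict_ofFun (f : Y → ℝ) (hf : Continuous f) (A : Set Y) :
    (ofFun f hf).restrict A = ofFun (fun a : A => f a) (hf.comp continuous_subtype_val) := rfl

theorem isClosedForm_add_ofFun {ω : PreForm Y} {f : Y → ℝ} (hf : Continuous f) :
    (ω.add (ofFun f hf)).IsClosedForm ↔ ω.IsClosedForm := by
  simp only [IsClosedForm, add, ofFun, Set.inter_univ, add_sub_add_right_eq_sub, Prod.forall]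
  simp

theorem Equiv.refl {ω : PreForm Y} (hω : ω.IsClosedForm) : ω.Equiv ω :=
  ⟨hω, hω, hω⟩

theorem Equiv.add_ofFun_of_eq_neg {η ω : PreForm Y} {f g : Y → ℝ} {hf : Continuous f}
    (hg : Continuous g) (hgf : ∀ y, g y = -f y) (hηω : η.Equiv (ω.add (ofFun f hf))) :
    (η.add (ofFun g hg)).Equiv ω := by
  obtain ⟨hη, hωf, hcross⟩ := hηω
  refine ⟨(isClosedForm_add_ofFun hg).2 hη, (isClosedForm_add_ofFun hf).1 hωf,
    fun i j => ?_⟩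
  refine ((hcross i.1 (j, ⟨⟩)).mono ?_).congr ?_
  · rintro y ⟨⟨hi, -⟩, hj⟩
    exact ⟨hi, hj, trivial⟩
  · intro y _
    simp only [add, ofFun, hgf]
    ring

end PreForm

theorem tietze_extension_closed_one_forms_general {X : Type} [MetricSpace X]
    (A : Set X)
    (tietze : ∀ f : A → ℝ, Continuous f → ∃ F : X → ℝ, Continuous F ∧ ∀ a : A, F a = f a)
    (ω : PreForm A)
    (Ω : PreForm X) (hΩ : Ω.IsClosedForm)
    (hclass : Cohomologous (Ω.restrict A) ω) :
    ∃ ω' : PreForm X, ω'.IsClosedForm ∧ Cohomologous ω' Ω ∧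
      PreForm.Equiv (ω'.restrict A) ω := by
  obtain ⟨f, hf, hΩω⟩ := hclass
  obtain ⟨F, hF, hFf⟩ := tietze f hf
  have hω' : (Ω.add (PreForm.ofFun (-F) hF.neg)).IsClosedForm :=
    (PreForm.isClosedForm_add_ofFun _).2 hΩ
  refine ⟨Ω.add (PreForm.ofFun (-F) hF.neg), hω', ⟨-F, hF.neg, .refl hω'⟩, ?_⟩
  rw [PreForm.restrict_add, PreForm.restrict_ofFun]
  exact hΩω.add_ofFun_of_eq_neg _ fun a => by simp [hFf]

/-- Tietze extension for closed one-forms: if `ω` is a closed one-form on a closed subset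
`A` whose class is the restriction of a class on `X` (represented by `Ω`), then there is a
closed one-form `ω'` on `X` cohomologous to `Ω` with `ω'|_A = ω`. -/
theorem tietze_extension_closed_one_forms {X : Type} [MetricSpace X]
    (A : Set X) (hA : IsClosed A)
    (tietze : ∀ f : A → ℝ, Continuous f → ∃ F : X → ℝ, Continuous F ∧ ∀ a : A, F a = f a)
    (ω : PreForm A) (hω : ω.IsClosedForm)
    (Ω : PreForm X) (hΩ : Ω.IsClosedForm)
    (hclass : Cohomologous (Ω.restrict A) ω) :
    ∃ ω' : PreForm X, ω'.IsClosedForm ∧ Cohomologous ω' Ω ∧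
      PreForm.Equiv (ω'.restrict A) ω :=
  tietze_extension_closed_one_forms_general A tietze ω Ω hΩ hclass
end
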